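/- Let n ≥ 1, let M be a binary n×n matrix with slab decomposition K, and let i ∈ {1,…,n}. With C_i = {[a,b] : (a,b,c,i) ∈ K for some c ≤ i}, O_{i+1} = {[a,b] : (a,b,i+1,d) ∈ K for some d ≥ i+1} (and O_{n+1} = ∅, strips_{n+1} = ∅), we have |strips_i \ strips_{i+1}| ≤ |C_i| + 2|O_{i+1}| (identifying strips with their row segments). -/
import Mathlib


/-- `M` is treated as a binary `n × n` matrix via its entries `M i j` for `i, j ∈ {1, …, n}`.
`IsSlab M n a b c d` says that the zone `M[[a,b],[c,d]]` is entirely filled with ones. -/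
def IsSlab (M : ℕ → ℕ → Bool) (n a b c d : ℕ) : Prop :=
  1 ≤ a ∧ a ≤ b ∧ b ≤ n ∧ 1 ≤ c ∧ c ≤ d ∧ d ≤ n ∧
    ∀ i ∈ Set.Icc a b, ∀ j ∈ Set.Icc c d, M i j = true

/-- A corner: a `2 × 2` zone `M[[i,i+1],[j,j+1]]` whose two rows are different and whose
two columns are different. -/
def IsMatCorner (M : ℕ → ℕ → Bool) (n i j : ℕ) : Prop :=
  1 ≤ i ∧ i + 1 ≤ n ∧ 1 ≤ j ∧ j + 1 ≤ n ∧
    (M i j, M i (j + 1)) ≠ (M (i + 1) j, M (i + 1) (j + 1)) ∧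
    (M i j, M (i + 1) j) ≠ (M i (j + 1), M (i + 1) (j + 1))

/-- An `i`-strip `(a,b,i,i)`: a one-column slab that cannot be extended upwards or downwards
(note that for `i = 0` or `i = n+1` this is automatically false, matching the convention
`strips_0 = strips_{n+1} = ∅`). -/
def IsStrip (M : ℕ → ℕ → Bool) (n a b i : ℕ) : Prop :=
  IsSlab M n a b i i ∧ ¬ IsSlab M n (a - 1) b i i ∧ ¬ IsSlab M n a (b + 1) i i

/-- Strips, encoded as triples `(a, b, i)` standing for the slab `(a, b, i, i)`, are siblings
if they have the same row segment and every column in between carries the same strip. -/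
def Sibling (M : ℕ → ℕ → Bool) (n : ℕ) (s t : ℕ × ℕ × ℕ) : Prop :=
  s.1 = t.1 ∧ s.2.1 = t.2.1 ∧
    ∀ k ∈ Set.Icc (min s.2.2 t.2.2) (max s.2.2 t.2.2), IsStrip M n s.1 s.2.1 k

/-- `(a,b,c,d)` is a canonical slab of `M`: the sibling equivalence class of the strip
`(a,b,c)` is exactly `{(a,b,k) : k ∈ [c,d]}`. -/
def IsCanonicalSlab (M : ℕ → ℕ → Bool) (n a b c d : ℕ) : Prop :=
  IsStrip M n a b c ∧
    ∀ t : ℕ × ℕ × ℕ, Sibling M n (a, b, c) t ↔ t.1 = a ∧ t.2.1 = b ∧ c ≤ t.2.2 ∧ t.2.2 ≤ d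

/-- The set of cells of a slab given as a quadruple `(a, b, c, d)`. -/
def slabCells (q : ℕ × ℕ × ℕ × ℕ) : Set (ℕ × ℕ) :=
  Set.Icc q.1 q.2.1 ×ˢ Set.Icc q.2.2.1 q.2.2.2

/-- A slab decomposition of `M`: a set of pairwise disjoint slabs covering all ones of `M`. -/
def IsSlabDecomp (M : ℕ → ℕ → Bool) (n : ℕ) (K : Set (ℕ × ℕ × ℕ × ℕ)) : Prop :=
  (∀ q ∈ K, IsSlab M n q.1 q.2.1 q.2.2.1 q.2.2.2) ∧
    (K.Pairwise fun q r => Disjoint (slabCells q) (slabCells r)) ∧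
    (∀ i j, 1 ≤ i → i ≤ n → 1 ≤ j → j ≤ n → M i j = true → ∃ q ∈ K, (i, j) ∈ slabCells q)

/-- The closing segments of `K` in column `i`: row segments `[a,b]` of slabs of `K` whose
column range ends at `i`. -/
def closingSegs (K : Set (ℕ × ℕ × ℕ × ℕ)) (i : ℕ) : Set (ℕ × ℕ) :=
  {s | ∃ c, c ≤ i ∧ (s.1, s.2, c, i) ∈ K}

/-- The opening segments of `K` in column `j`: row segments `[a,b]` of slabs of `K` whose
column range starts at `j`. -/
def openingSegs (K : Set (ℕ × ℕ × ℕ × ℕ)) (j : ℕ) : Set (ℕ × ℕ) :=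
  {s | ∃ d, j ≤ d ∧ (s.1, s.2, j, d) ∈ K}

section Aux

variable {M : ℕ → ℕ → Bool} {n a b i : ℕ}

lemma strip_ones (h : IsStrip M n a b i) : ∀ x, a ≤ x → x ≤ b → M x i = true := by
  intro x h1 h2
  exact h.1.2.2.2.2.2.2 x (Set.mem_Icc.2 ⟨h1, h2⟩) i (Set.mem_Icc.2 ⟨le_rfl, le_rfl⟩)

lemma strip_left (h : IsStrip M n a b i) (ha : 2 ≤ a) : M (a - 1) i = false := by
  obtain ⟨⟨h1, h2, h3, h4, h5, h6, h7⟩, hL, _⟩ := h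
  by_contra hT
  rw [Bool.not_eq_false] at hT
  apply hL
  refine ⟨by omega, by omega, h3, h4, h5, h6, ?_⟩
  intro x hx j hj
  rw [Set.mem_Icc] at hx hj
  rcases Nat.lt_or_ge x a with hxa | hxa
  · have : x = a - 1 := by omega
    have : j = i := by omega
    subst this; subst ‹x = a - 1›; exact hT
  · exact h7 x (Set.mem_Icc.2 ⟨hxa, hx.2⟩) j (Set.mem_Icc.2 hj)

lemma strip_right (h : IsStrip M n a b i) (hb : b + 1 ≤ n) : M (b + 1) i = false := by
  obtain ⟨⟨h1, h2, h3, h4, h5, h6, h7⟩, _, hR⟩ := h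
  by_contra hT
  rw [Bool.not_eq_false] at hT
  apply hR
  refine ⟨h1, by omega, hb, h4, h5, h6, ?_⟩
  intro x hx j hj
  rw [Set.mem_Icc] at hx hj
  rcases Nat.lt_or_ge b x with hxb | hxb
  · have : x = b + 1 := by omega
    have : j = i := by omega
    subst this; subst ‹x = b + 1›; exact hT
  · exact h7 x (Set.mem_Icc.2 ⟨hx.1, hxb⟩) j (Set.mem_Icc.2 hj)

lemma strip_unique {a' b' x : ℕ} (h1 : IsStrip M n a b i) (h2 : IsStrip M n a' b' i)
    (hx1 : a ≤ x) (hx2 : x ≤ b) (hx3 : a' ≤ x) (hx4 : x ≤ b') : a = a' ∧ b = b' := by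
  have hb1 := h1.1.2.1
  have hb2 := h2.1.2.1
  have ha1 := h1.1.1
  have ha2 := h2.1.1
  have hn1 := h1.1.2.2.1
  have hn2 := h2.1.2.2.1
  constructor
  · by_contra hne
    rcases Nat.lt_or_ge a a' with hlt | hge
    · have : M (a' - 1) i = true := strip_ones h1 (a' - 1) (by omega) (by omega)
      have := strip_left h2 (by omega)
      simp_all
    · have hlt : a' < a := by omega
      have : M (a - 1) i = true := strip_ones h2 (a - 1) (by omega) (by omega)
      have := strip_left h1 (by omega)
      simp_all
  · by_contra hne
    rcases Nat.lt_or_ge b b' with hlt | hge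
    · have : M (b + 1) i = true := strip_ones h2 (b + 1) (by omega) (by omega)
      have := strip_right h1 (by omega)
      simp_all
    · have hlt : b' < b := by omega
      have : M (b' + 1) i = true := strip_ones h1 (b' + 1) (by omega) (by omega)
      have := strip_right h2 (by omega)
      simp_all

lemma mem_slabCells {q : ℕ × ℕ × ℕ × ℕ} {x j : ℕ} :
    (x, j) ∈ slabCells q ↔ (q.1 ≤ x ∧ x ≤ q.2.1) ∧ (q.2.2.1 ≤ j ∧ j ≤ q.2.2.2) := by
  simp only [slabCells, Set.mem_prod, Set.mem_Icc]

lemma seg_subset {K : Set (ℕ × ℕ × ℕ × ℕ)} {p r c d x : ℕ}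
    (hK : IsSlabDecomp M n K) (hmem : (p, r, c, d) ∈ K) (hci : c ≤ i) (hid : i ≤ d)
    (hs : IsStrip M n a b i) (hpx : p ≤ x) (hxr : x ≤ r) (hax : a ≤ x) (hxb : x ≤ b) :
    a ≤ p ∧ r ≤ b := by
  have hslab : IsSlab M n p r c d := hK.1 _ hmem
  obtain ⟨h1, h2, h3, _, _, h6, h7⟩ := hslab
  have hones : ∀ y, p ≤ y → y ≤ r → M y i = true := fun y hy1 hy2 =>
    h7 y (Set.mem_Icc.2 ⟨hy1, hy2⟩) i (Set.mem_Icc.2 ⟨hci, hid⟩)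
  constructor
  · by_contra hlt
    have hpa : p < a := by omega
    have : M (a - 1) i = true := hones (a - 1) (by omega) (by omega)
    have := strip_left hs (by omega)
    simp_all
  · by_contra hlt
    have hbr : b < r := by omega
    have : M (b + 1) i = true := hones (b + 1) (by omega) (by omega)
    have := strip_right hs (by omega)
    simp_all

/-- Main charging lemma. -/
lemma exists_good {K : Set (ℕ × ℕ × ℕ × ℕ)}
    (hK : IsSlabDecomp M n K) (hi : 1 ≤ i) (hin : i ≤ n)
    (hs : IsStrip M n a b i) (hns : ¬ IsStrip M n a b (i + 1)) :
    (∃ p r, (p, r) ∈ closingSegs K i ∧ p ≤ r ∧ a ≤ p ∧ r ≤ b) ∨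
    (∃ p r, (p, r) ∈ openingSegs K (i + 1) ∧ a = r + 1) ∨
    (∃ p r, (p, r) ∈ openingSegs K (i + 1) ∧ b + 1 = p) := by
  obtain ⟨hK1, hK2, hK3⟩ := hK
  have ha1 : 1 ≤ a := hs.1.1
  have hab : a ≤ b := hs.1.2.1
  have hbn : b ≤ n := hs.1.2.2.1
  by_cases hclose : ∃ p r c, c ≤ i ∧ (p, r, c, i) ∈ K ∧ ∃ x, (p ≤ x ∧ x ≤ r) ∧ (a ≤ x ∧ x ≤ b)
  · obtain ⟨p, r, c, hc, hmem, x, ⟨hpx, hxr⟩, hax, hxb⟩ := hclose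
    left
    have hsub := seg_subset (M := M) ⟨hK1, hK2, hK3⟩ hmem hc le_rfl hs hpx hxr hax hxb
    have hslab : IsSlab M n p r c i := hK1 _ hmem
    exact ⟨p, r, ⟨c, hc, hmem⟩, hslab.2.1, hsub.1, hsub.2⟩
  · -- every slab covering column i of the strip continues to column i+1
    have hcont : ∀ x, a ≤ x → x ≤ b →
        ∃ p r c d, (p, r, c, d) ∈ K ∧ p ≤ x ∧ x ≤ r ∧ c ≤ i ∧ i + 1 ≤ d := by
      intro x hax hxb
      have hMx : M x i = true := strip_ones hs x hax hxb
      obtain ⟨q, hq, hcell⟩ := hK3 x i (by omega) (by omega) hi hin hMx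
      obtain ⟨p, r, c, d⟩ := q
      obtain ⟨⟨hpx, hxr⟩, hci, hid⟩ : (p ≤ x ∧ x ≤ r) ∧ (c ≤ i ∧ i ≤ d) :=
        mem_slabCells.1 hcell
      refine ⟨p, r, c, d, hq, hpx, hxr, hci, ?_⟩
      rcases Nat.lt_or_ge i d with h | h
      · omega
      · exfalso
        have : d = i := by omega
        subst this
        exact hclose ⟨p, r, c, hci, hq, x, ⟨hpx, hxr⟩, hax, hxb⟩
    have hn1 : i + 1 ≤ n := by
      obtain ⟨p, r, c, d, hq, _⟩ := hcont a le_rfl hab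
      have hslab : IsSlab M n p r c d := hK1 _ hq
      have := hslab.2.2.2.2.2.1
      omega
    have hcol : ∀ x, a ≤ x → x ≤ b → M x (i + 1) = true := by
      intro x hax hxb
      obtain ⟨p, r, c, d, hq, hpx, hxr, hci, hid⟩ := hcont x hax hxb
      have hslab : IsSlab M n p r c d := hK1 _ hq
      exact hslab.2.2.2.2.2.2 x (Set.mem_Icc.2 ⟨hpx, hxr⟩) (i + 1)
        (Set.mem_Icc.2 ⟨by omega, hid⟩)
    have hSlab1 : IsSlab M n a b (i + 1) (i + 1) := by
      refine ⟨ha1, hab, hbn, by omega, le_rfl, hn1, ?_⟩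
      intro x hx j hj
      rw [Set.mem_Icc] at hx hj
      have : j = i + 1 := by omega
      subst this
      exact hcol x hx.1 hx.2
    have hext : IsSlab M n (a - 1) b (i + 1) (i + 1) ∨ IsSlab M n a (b + 1) (i + 1) (i + 1) := by
      by_contra h
      push_neg at h
      exact hns ⟨hSlab1, h.1, h.2⟩
    rcases hext with hA | hB
    · -- extension below
      have ha2 : 2 ≤ a := by have h1 := hA.1; omega
      have hMa1 : M (a - 1) (i + 1) = true :=
        hA.2.2.2.2.2.2 (a - 1) (Set.mem_Icc.2 ⟨le_rfl, by omega⟩) (i + 1)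
          (Set.mem_Icc.2 ⟨le_rfl, le_rfl⟩)
      have hMa1i : M (a - 1) i = false := strip_left hs ha2
      obtain ⟨q, hq, hcell⟩ := hK3 (a - 1) (i + 1) (by omega) (by omega) (by omega) hn1 hMa1
      obtain ⟨p, r, c, d⟩ := q
      obtain ⟨⟨hpa, har⟩, hci, hid⟩ : (p ≤ a - 1 ∧ a - 1 ≤ r) ∧ (c ≤ i + 1 ∧ i + 1 ≤ d) :=
        mem_slabCells.1 hcell
      have hc : c = i + 1 := by
        rcases Nat.lt_or_ge i c with h | h
        · omega
        · exfalso
          have hslab : IsSlab M n p r c d := hK1 _ hq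
          have : M (a - 1) i = true :=
            hslab.2.2.2.2.2.2 (a - 1) (Set.mem_Icc.2 ⟨hpa, har⟩) i
              (Set.mem_Icc.2 ⟨h, by omega⟩)
          simp_all
      subst hc
      have hr : r = a - 1 := by
        by_contra hne
        have har' : a ≤ r := by omega
        -- slab covering (a, i) continues, covering (a, i+1)
        obtain ⟨p', r', c', d', hq', hp'a, har'', hc'i, hid'⟩ := hcont a le_rfl hab
        have hne2 : (p', r', c', d') ≠ (p, r, i + 1, d) := by
          intro heq
          obtain ⟨h1, h2, h3, h4⟩ : p' = p ∧ r' = r ∧ c' = i + 1 ∧ d' = d := by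
            simpa [Prod.ext_iff] using heq
          omega
        have hdisj := hK2 hq' hq hne2
        have h1 : (a, i + 1) ∈ slabCells (p', r', c', d') :=
          mem_slabCells.2 ⟨⟨hp'a, har''⟩, show c' ≤ i + 1 by omega, hid'⟩
        have h2 : (a, i + 1) ∈ slabCells (p, r, i + 1, d) :=
          mem_slabCells.2 ⟨⟨show p ≤ a by omega, har'⟩, le_rfl, hid⟩
        exact Set.disjoint_left.mp hdisj h1 h2
      right; left
      exact ⟨p, r, ⟨d, hid, hq⟩, by omega⟩
    · -- extension above
      have hb1 : b + 1 ≤ n := hB.2.2.1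
      have hMb1 : M (b + 1) (i + 1) = true :=
        hB.2.2.2.2.2.2 (b + 1) (Set.mem_Icc.2 ⟨by omega, le_rfl⟩) (i + 1)
          (Set.mem_Icc.2 ⟨le_rfl, le_rfl⟩)
      have hMb1i : M (b + 1) i = false := strip_right hs hb1
      obtain ⟨q, hq, hcell⟩ := hK3 (b + 1) (i + 1) (by omega) hb1 (by omega) hn1 hMb1
      obtain ⟨p, r, c, d⟩ := q
      obtain ⟨⟨hpb, hbr⟩, hci, hid⟩ : (p ≤ b + 1 ∧ b + 1 ≤ r) ∧ (c ≤ i + 1 ∧ i + 1 ≤ d) :=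
        mem_slabCells.1 hcell
      have hc : c = i + 1 := by
        rcases Nat.lt_or_ge i c with h | h
        · omega
        · exfalso
          have hslab : IsSlab M n p r c d := hK1 _ hq
          have : M (b + 1) i = true :=
            hslab.2.2.2.2.2.2 (b + 1) (Set.mem_Icc.2 ⟨hpb, hbr⟩) i
              (Set.mem_Icc.2 ⟨h, by omega⟩)
          simp_all
      subst hc
      have hp : p = b + 1 := by
        by_contra hne
        have hpb' : p ≤ b := by omega
        obtain ⟨p', r', c', d', hq', hp'b, hbr'', hc'i, hid'⟩ := hcont b hab le_rfl
        have hne2 : (p', r', c', d') ≠ (p, r, i + 1, d) := by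
          intro heq
          obtain ⟨h1, h2, h3, h4⟩ : p' = p ∧ r' = r ∧ c' = i + 1 ∧ d' = d := by
            simpa [Prod.ext_iff] using heq
          omega
        have hdisj := hK2 hq' hq hne2
        have h1 : (b, i + 1) ∈ slabCells (p', r', c', d') :=
          mem_slabCells.2 ⟨⟨hp'b, hbr''⟩, show c' ≤ i + 1 by omega, hid'⟩
        have h2 : (b, i + 1) ∈ slabCells (p, r, i + 1, d) :=
          mem_slabCells.2 ⟨⟨hpb', show b ≤ r by omega⟩, le_rfl, hid⟩
        exact Set.disjoint_left.mp hdisj h1 h2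
      right; right
      exact ⟨p, r, ⟨d, hid, hq⟩, hp.symm⟩

end Aux

/-- The number of strips in `strips_i \ strips_{i+1}` is at most `|C_i| + 2·|O_{i+1}|`. -/
theorem vanishing_strips_count (n : ℕ) (M : ℕ → ℕ → Bool) (hn : 1 ≤ n)
    (K : Set (ℕ × ℕ × ℕ × ℕ)) (hK : IsSlabDecomp M n K)
    (i : ℕ) (hi : 1 ≤ i) (hin : i ≤ n) :
    Set.ncard {s : ℕ × ℕ | IsStrip M n s.1 s.2 i ∧ ¬ IsStrip M n s.1 s.2 (i + 1)} ≤
      Set.ncard (closingSegs K i) + 2 * Set.ncard (openingSegs K (i + 1)) := by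
  classical
  set V : Set (ℕ × ℕ) :=
    {s : ℕ × ℕ | IsStrip M n s.1 s.2 i ∧ ¬ IsStrip M n s.1 s.2 (i + 1)} with hV
  set C : Set (ℕ × ℕ) := closingSegs K i with hC
  set O : Set (ℕ × ℕ) := openingSegs K (i + 1) with hO
  have hCfin : C.Finite := by
    apply Set.Finite.subset ((Set.finite_Icc 1 n).prod (Set.finite_Icc 1 n))
    rintro ⟨p, r⟩ ⟨c, hc, hmem⟩
    have hslab : IsSlab M n p r c i := hK.1 _ hmem
    have h1 := hslab.1
    have h2 := hslab.2.1
    have h3 := hslab.2.2.1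
    exact ⟨Set.mem_Icc.2 ⟨by omega, by omega⟩, Set.mem_Icc.2 ⟨by omega, by omega⟩⟩
  have hOfin : O.Finite := by
    apply Set.Finite.subset ((Set.finite_Icc 1 n).prod (Set.finite_Icc 1 n))
    rintro ⟨p, r⟩ ⟨d, hd, hmem⟩
    have hslab : IsSlab M n p r (i + 1) d := hK.1 _ hmem
    have h1 := hslab.1
    have h2 := hslab.2.1
    have h3 := hslab.2.2.1
    exact ⟨Set.mem_Icc.2 ⟨by omega, by omega⟩, Set.mem_Icc.2 ⟨by omega, by omega⟩⟩
  set T : Set ((ℕ × ℕ) ⊕ ((ℕ × ℕ) ⊕ (ℕ × ℕ))) :=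
    Sum.inl '' C ∪ ((Sum.inr ∘ Sum.inl) '' O ∪ (Sum.inr ∘ Sum.inr) '' O) with hT
  have hTfin : T.Finite :=
    (hCfin.image _).union ((hOfin.image _).union (hOfin.image _))
  have hex : ∀ s : ℕ × ℕ, s ∈ V → ∃ t : (ℕ × ℕ) ⊕ ((ℕ × ℕ) ⊕ (ℕ × ℕ)),
      ((∃ p r, t = Sum.inl (p, r) ∧ (p, r) ∈ C ∧ p ≤ r ∧ s.1 ≤ p ∧ r ≤ s.2) ∨
       (∃ p r, t = Sum.inr (Sum.inl (p, r)) ∧ (p, r) ∈ O ∧ s.1 = r + 1) ∨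
       (∃ p r, t = Sum.inr (Sum.inr (p, r)) ∧ (p, r) ∈ O ∧ s.2 + 1 = p)) := by
    rintro ⟨a, b⟩ ⟨hs, hns⟩
    rcases exists_good hK hi hin hs hns with
      ⟨p, r, h1, h2, h3, h4⟩ | ⟨p, r, h1, h2⟩ | ⟨p, r, h1, h2⟩
    · exact ⟨Sum.inl (p, r), Or.inl ⟨p, r, rfl, h1, h2, h3, h4⟩⟩
    · exact ⟨Sum.inr (Sum.inl (p, r)), Or.inr (Or.inl ⟨p, r, rfl, h1, h2⟩)⟩
    · exact ⟨Sum.inr (Sum.inr (p, r)), Or.inr (Or.inr ⟨p, r, rfl, h1, h2⟩)⟩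
  have hex' : ∀ s : ℕ × ℕ, ∃ t : (ℕ × ℕ) ⊕ ((ℕ × ℕ) ⊕ (ℕ × ℕ)), s ∈ V →
      ((∃ p r, t = Sum.inl (p, r) ∧ (p, r) ∈ C ∧ p ≤ r ∧ s.1 ≤ p ∧ r ≤ s.2) ∨
       (∃ p r, t = Sum.inr (Sum.inl (p, r)) ∧ (p, r) ∈ O ∧ s.1 = r + 1) ∨
       (∃ p r, t = Sum.inr (Sum.inr (p, r)) ∧ (p, r) ∈ O ∧ s.2 + 1 = p)) := by
    intro s
    by_cases h : s ∈ V
    · obtain ⟨t, ht⟩ := hex s h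
      exact ⟨t, fun _ => ht⟩
    · exact ⟨Sum.inl (0, 0), fun hs => absurd hs h⟩
  choose f hf using hex'
  have hmaps : ∀ s ∈ V, f s ∈ T := by
    intro s hs
    rcases hf s hs with ⟨p, r, ht, hm, _⟩ | ⟨p, r, ht, hm, _⟩ | ⟨p, r, ht, hm, _⟩
    · rw [ht]; exact Set.mem_union_left _ ⟨(p, r), hm, rfl⟩
    · rw [ht]; exact Set.mem_union_right _ (Set.mem_union_left _ ⟨(p, r), hm, rfl⟩)
    · rw [ht]; exact Set.mem_union_right _ (Set.mem_union_right _ ⟨(p, r), hm, rfl⟩)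
  have hinj : Set.InjOn f V := by
    rintro ⟨a1, b1⟩ hs1 ⟨a2, b2⟩ hs2 heq
    have hst1 : IsStrip M n a1 b1 i := hs1.1
    have hst2 : IsStrip M n a2 b2 i := hs2.1
    rcases hf _ hs1 with ⟨p, r, ht, hm, hpr, hap, hrb⟩ | ⟨p, r, ht, hm, har⟩ |
        ⟨p, r, ht, hm, hbp⟩ <;>
      rcases hf _ hs2 with ⟨p', r', ht', hm', hpr', hap', hrb'⟩ | ⟨p', r', ht', hm', har'⟩ |
        ⟨p', r', ht', hm', hbp'⟩ <;>
      rw [ht, ht'] at heq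
    · simp only [Sum.inl.injEq, Sum.inr.injEq, Prod.mk.injEq] at heq
      obtain ⟨hpp, hrr⟩ := heq
      subst hpp; subst hrr
      obtain ⟨he1, he2⟩ := strip_unique hst1 hst2 hap (by omega) hap' (by omega)
      simp [he1, he2]
    · simp at heq
    · simp at heq
    · simp at heq
    · simp only [Sum.inl.injEq, Sum.inr.injEq, Prod.mk.injEq] at heq
      obtain ⟨hpp, hrr⟩ := heq
      subst hpp; subst hrr
      have hab1 : a1 ≤ b1 := hst1.1.2.1
      have hab2 : a2 ≤ b2 := hst2.1.2.1
      obtain ⟨he1, he2⟩ := strip_unique hst1 hst2 (x := a1) le_rfl hab1 (by omega) (by omega)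
      simp [he1, he2]
    · simp at heq
    · simp at heq
    · simp at heq
    · simp only [Sum.inl.injEq, Sum.inr.injEq, Prod.mk.injEq] at heq
      obtain ⟨hpp, hrr⟩ := heq
      subst hpp; subst hrr
      have hab1 : a1 ≤ b1 := hst1.1.2.1
      have hab2 : a2 ≤ b2 := hst2.1.2.1
      obtain ⟨he1, he2⟩ := strip_unique hst1 hst2 (x := b1) hab1 le_rfl (by omega) (by omega)
      simp [he1, he2]
  have hmain : V.ncard ≤ T.ncard := Set.ncard_le_ncard_of_injOn f hmaps hinj hTfin
  have hT1 : T.ncard ≤ C.ncard + (O.ncard + O.ncard) := by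
    calc T.ncard ≤ (Sum.inl '' C).ncard +
        ((Sum.inr ∘ Sum.inl) '' O ∪ (Sum.inr ∘ Sum.inr) '' O).ncard :=
          Set.ncard_union_le _ _
      _ ≤ (Sum.inl '' C).ncard +
          (((Sum.inr ∘ Sum.inl) '' O).ncard + ((Sum.inr ∘ Sum.inr) '' O).ncard) := by
          exact Nat.add_le_add_left (Set.ncard_union_le _ _) _
      _ = C.ncard + (O.ncard + O.ncard) := by
          rw [Set.ncard_image_of_injective _ Sum.inl_injective,
            Set.ncard_image_of_injective _ (Sum.inr_injective.comp Sum.inl_injective),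
            Set.ncard_image_of_injective _ (Sum.inr_injective.comp Sum.inr_injective)]
  omega
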